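/- The normalized partition function is the generating function of the k-th row of the monotone triangle: in each of the four phases, for every real (t,γ) in the phase's range, every 1≤k≤n, and all complex ξ₁,…,ξ_k, one has Z̃_n(ξ₁,…,ξ_k;t,γ) = ∑_ν Prob((λ_1^k,…,λ_k^k)=ν) · F^{sym}_ν(ξ₁,…,ξ_k;t,γ,n)/F^{sym}_ν(0,…,0;t,γ,n), where the sum runs over strictly increasing k-tuples ν=(ν₁<⋯<ν_k) in {1,…,n}, Prob refers to the Gibbs measure on DWBC configurations of the n×n square with homogeneous weights (a(t,γ),b(t,γ),c(γ)), and all the normalizing quantities F^{sym}_ν(0,…,0;t,γ,n) and Z_n(0,…,0;t,…,t;γ) are nonzero for these parameters. -/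

import Mathlib

/-!
Fix the set `S` of columns in which paths cross the top of row `k`. A DWBC configuration whose
`k`-th row is `S` splits into a strip configuration with exit set `S` (its lowest `k` rows) and
the rest, and its weight with row parameters `t + ξ` is the strip weight with parameters `ξ`
times a weight of the rest that does not involve `ξ`. Exchanging the lowest `k` rows between a
DWBC configuration and a strip configuration with the same `S` is an involution on such pairs
that swaps the roles of `ξ` and `0`, whence
`(∑_{row k = S} W_ξ) · F_S(0) = (∑_{row k = S} W_0) · F_S(ξ)`; summing over `S` and dividing by
`Z_n` gives the generating function. For the nonvanishing, `a, b > 0` and `c ≠ 0` in every phase,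
and a strip configuration has `N₅ = N₆ + k`, so all terms of `F_S(0)` have the sign of `c ^ k`;
the square itself is the strip with `k = n` and `S` everything.
-/

open scoped BigOperators
open Filter MeasureTheory Topology

namespace SixV


/-- Edge occupations for the six-vertex model on the `n × n` square:
`σ.1 x j` is the occupation of the horizontal edge between `(x, j+1)` and `(x+1, j+1)`
(i.e. `H(x, j+1)` for `x ∈ {0,…,n}`), and `σ.2 i y` is the occupation of the vertical
edge `V(i+1, y)` for `y ∈ {0,…,n}`. -/
abbrev Config (n : ℕ) := (Fin (n + 1) → Fin n → Bool) × (Fin n → Fin (n + 1) → Bool)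

def b2n (b : Bool) : ℕ := if b then 1 else 0

/-- Domain Wall Boundary Conditions together with the ice rule (conservation law). -/
def IsDWBC {n : ℕ} (σ : Config n) : Prop :=
  (∀ i j : Fin n,
      b2n (σ.1 i.castSucc j) + b2n (σ.2 i j.castSucc)
        = b2n (σ.1 i.succ j) + b2n (σ.2 i j.succ)) ∧
  (∀ j : Fin n, σ.1 0 j = true) ∧
  (∀ j : Fin n, σ.1 (Fin.last n) j = false) ∧
  (∀ i : Fin n, σ.2 i 0 = false) ∧
  (∀ i : Fin n, σ.2 i (Fin.last n) = true)

abbrev DWBC (n : ℕ) := {σ : Config n // IsDWBC σ}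

noncomputable instance instFintypeDWBC (n : ℕ) : Fintype (DWBC n) := Fintype.ofFinite _

/-- Vertex type from quadruple (H(x−1,y), V(x,y−1), H(x,y), V(x,y)). -/
def vtype : Bool → Bool → Bool → Bool → ℕ
  | false, false, false, false => 1
  | true,  true,  true,  true  => 2
  | true,  false, true,  false => 3
  | false, true,  false, true  => 4
  | true,  false, false, true  => 5
  | false, true,  true,  false => 6
  | _, _, _, _ => 0

/-- Type of the vertex at `(i+1, j+1)`. -/
def vertexType {n : ℕ} (σ : Config n) (i j : Fin n) : ℕ :=
  vtype (σ.1 i.castSucc j) (σ.2 i j.castSucc) (σ.1 i.succ j) (σ.2 i j.succ)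

/-- `Ncount σ t` is the number of vertices of Type `t`. -/
noncomputable def Ncount {n : ℕ} (σ : Config n) (ty : ℕ) : ℕ :=
  (Finset.univ.filter fun p : Fin n × Fin n => vertexType σ p.1 p.2 = ty).card

/-- The weight `a^(N₁+N₂) b^(N₃+N₄) c^(N₅+N₆)`. -/
noncomputable def wtABC {n : ℕ} (a b c : ℝ) (σ : Config n) : ℝ :=
  a ^ (Ncount σ 1 + Ncount σ 2) * b ^ (Ncount σ 3 + Ncount σ 4)
    * c ^ (Ncount σ 5 + Ncount σ 6)

/-- Gibbs probability of a DWBC configuration. -/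
noncomputable def gibbs (n : ℕ) (a b c : ℝ) (σ : DWBC n) : ℝ :=
  wtABC a b c σ.1 / ∑ σ' : DWBC n, wtABC a b c σ'.1

/-- Columns `x ∈ {1,…,n}` with `V(x, j) = 1`. -/
noncomputable def rowFinset {n : ℕ} (σ : DWBC n) (j : ℕ) : Finset ℕ :=
  if h : j ≤ n then
    (Finset.univ.filter fun x : Fin n => σ.1.2 x ⟨j, Nat.lt_succ_of_le h⟩ = true).image
      fun x : Fin n => (x : ℕ) + 1
  else ∅

/-- The monotone triangle: `lam σ i j` is the `i`-th smallest column with `V(·, j) = 1`. -/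
noncomputable def lam {n : ℕ} (σ : DWBC n) (i j : ℕ) : ℕ :=
  ((rowFinset σ j).sort (· ≤ ·)).getD (i - 1) 0

/-- Weight of the vertex at `(i+1, j+1)` with column parameter `χ`, row parameter `ψ`,
and weight functions `A, B, C` (types 1/2 ↦ `A(ψ_y−χ_x, γ)`, 3/4 ↦ `B(ψ_y−χ_x, γ)`,
5/6 ↦ `C γ`). -/
noncomputable def vertexWt {n : ℕ} (A B : ℂ → ℂ → ℂ) (C : ℂ → ℂ)
    (χ ψ : Fin n → ℂ) (γ : ℂ) (σ : Config n) (i j : Fin n) : ℂ :=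
  if vertexType σ i j = 1 ∨ vertexType σ i j = 2 then A (ψ j - χ i) γ
  else if vertexType σ i j = 3 ∨ vertexType σ i j = 4 then B (ψ j - χ i) γ
  else C γ

/-- The inhomogeneous partition function `Z_n(χ₁,…,χ_n; ψ₁,…,ψ_n; γ)`. -/
noncomputable def Zinh (n : ℕ) (A B : ℂ → ℂ → ℂ) (C : ℂ → ℂ)
    (χ ψ : Fin n → ℂ) (γ : ℂ) : ℂ :=
  ∑ σ : DWBC n, ∏ p : Fin n × Fin n, vertexWt A B C χ ψ γ σ.1 p.1 p.2

/-- The normalized partition function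
`Z̃_n(ξ₁,…,ξ_k; t, γ) = Z_n(0^n; t+ξ₁,…,t+ξ_k, t^{n−k}; γ) / Z_n(0^n; t^n; γ)`. -/
noncomputable def Ztilde (A B : ℂ → ℂ → ℂ) (C : ℂ → ℂ) (n k : ℕ)
    (ξ : Fin k → ℂ) (t γ : ℝ) : ℂ :=
  Zinh n A B C (fun _ => 0)
      (fun y => if h : (y : ℕ) < k then (t : ℂ) + ξ ⟨y, h⟩ else (t : ℂ)) (γ : ℂ)
    / Zinh n A B C (fun _ => 0) (fun _ => (t : ℂ)) (γ : ℂ)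
/-- The four phases of weight parameterizations. -/
inductive Phase | fe | dis | afe | bd

/-- The weight function `a(u, γ)` of each phase. -/
noncomputable def phA : Phase → ℂ → ℂ → ℂ
  | .fe => fun u γ => Complex.sinh (u - γ)
  | .dis => fun u γ => Complex.sin (γ - u)
  | .afe => fun u γ => Complex.sinh (γ - u)
  | .bd => fun u γ => γ - u

/-- The weight function `b(u, γ)` of each phase. -/
noncomputable def phB : Phase → ℂ → ℂ → ℂ
  | .fe => fun u γ => Complex.sinh (u + γ)
  | .dis => fun u γ => Complex.sin (γ + u)
  | .afe => fun u γ => Complex.sinh (γ + u)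
  | .bd => fun u γ => γ + u

/-- The weight function `c(γ)` of each phase. -/
noncomputable def phC : Phase → ℂ → ℂ
  | .fe => fun γ => Complex.sinh (2 * γ)
  | .dis => fun γ => Complex.sin (2 * γ)
  | .afe => fun γ => Complex.sinh (2 * γ)
  | .bd => fun γ => 2 * γ

/-- The admissible range of the real parameters `(t, γ)` in each phase. -/
def phRange : Phase → ℝ → ℝ → Prop
  | .fe => fun t γ => 0 < |γ| ∧ |γ| < t
  | .dis => fun t γ => |t| < γ ∧ γ < Real.pi / 2
  | .afe => fun t γ => |t| < γ
  | .bd => fun t γ => |t| < γ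

/-- The convergence range for a shifted parameter `t + r`, `r = Re ξ`, in each phase. -/
def phConv : Phase → ℝ → ℝ → ℝ → Prop
  | .fe => fun t γ r => |γ| < t + r
  | .dis => fun t γ r => |t + r| < γ
  | .afe => fun t γ r => |t + r| < γ
  | .bd => fun t γ r => |t + r| < γ


/-- Edge occupations on the strip `{1,…,n} × {1,…,k}`. -/
abbrev SConfig (n k : ℕ) := (Fin (n + 1) → Fin k → Bool) × (Fin n → Fin (k + 1) → Bool)

/-- Type of the vertex at `(i+1, j+1)` of a strip configuration. -/
def vertexTypeS {n k : ℕ} (σ : SConfig n k) (i : Fin n) (j : Fin k) : ℕ :=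
  vtype (σ.1 i.castSucc j) (σ.2 i j.castSucc) (σ.1 i.succ j) (σ.2 i j.succ)

/-- Strip boundary conditions: paths enter on the left in every row, exit on top exactly
at the columns of `S`, and no paths enter from below or exit on the right. -/
def IsStrip {n k : ℕ} (S : Finset (Fin n)) (σ : SConfig n k) : Prop :=
  (∀ (i : Fin n) (j : Fin k),
      b2n (σ.1 i.castSucc j) + b2n (σ.2 i j.castSucc)
        = b2n (σ.1 i.succ j) + b2n (σ.2 i j.succ)) ∧
  (∀ j : Fin k, σ.1 0 j = true) ∧
  (∀ j : Fin k, σ.1 (Fin.last n) j = false) ∧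
  (∀ i : Fin n, σ.2 i 0 = false) ∧
  (∀ i : Fin n, (σ.2 i (Fin.last k) = true ↔ i ∈ S))

noncomputable instance instFintypeStrip {n k : ℕ} (S : Finset (Fin n)) :
    Fintype {σ : SConfig n k // IsStrip S σ} := Fintype.ofFinite _

/-- The strip partition function `F^{sym}_ν(ξ₁,…,ξ_k; t, γ, n)` with row-dependent
symmetric weights `a(t+ξ_y, γ), b(t+ξ_y, γ), c(γ)`; `S ⊆ {1,…,n}` is the set of exit
columns `ν`. -/
noncomputable def Fsym (ph : Phase) (n k : ℕ) (S : Finset (Fin n)) (ξ : Fin k → ℂ)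
    (t γ : ℝ) : ℂ :=
  ∑ σ : {σ : SConfig n k // IsStrip S σ}, ∏ p : Fin n × Fin k,
    (if vertexTypeS σ.1 p.1 p.2 = 1 ∨ vertexTypeS σ.1 p.1 p.2 = 2 then
        phA ph ((t : ℂ) + ξ p.2) (γ : ℂ)
      else if vertexTypeS σ.1 p.1 p.2 = 3 ∨ vertexTypeS σ.1 p.1 p.2 = 4 then
        phB ph ((t : ℂ) + ξ p.2) (γ : ℂ)
      else phC ph (γ : ℂ))

/-- The homogeneous real weights `a(t,γ), b(t,γ), c(γ)` of each phase. -/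
noncomputable def aR : Phase → ℝ → ℝ → ℝ
  | .fe => fun t γ => Real.sinh (t - γ)
  | .dis => fun t γ => Real.sin (γ - t)
  | .afe => fun t γ => Real.sinh (γ - t)
  | .bd => fun t γ => γ - t

noncomputable def bR : Phase → ℝ → ℝ → ℝ
  | .fe => fun t γ => Real.sinh (t + γ)
  | .dis => fun t γ => Real.sin (γ + t)
  | .afe => fun t γ => Real.sinh (γ + t)
  | .bd => fun t γ => γ + t

noncomputable def cR : Phase → ℝ → ℝ
  | .fe => fun γ => Real.sinh (2 * γ)
  | .dis => fun γ => Real.sin (2 * γ)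
  | .afe => fun γ => Real.sinh (2 * γ)
  | .bd => fun γ => 2 * γ

/-- The set of columns `x` with `V(x, k) = 1`, as a `Finset (Fin n)`. -/
noncomputable def rowFinF {n : ℕ} (σ : DWBC n) (k : ℕ) : Finset (Fin n) :=
  Finset.univ.filter fun x =>
    σ.1.2 x (if h : k ≤ n then ⟨k, Nat.lt_succ_of_le h⟩ else 0) = true


open Finset

lemma vtype_mem_of_ice : ∀ h₀ v₀ h₁ v₁ : Bool, b2n h₀ + b2n v₀ = b2n h₁ + b2n v₁ →
    vtype h₀ v₀ h₁ v₁ = 1 ∨ vtype h₀ v₀ h₁ v₁ = 2 ∨ vtype h₀ v₀ h₁ v₁ = 3 ∨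
      vtype h₀ v₀ h₁ v₁ = 4 ∨ vtype h₀ v₀ h₁ v₁ = 5 ∨ vtype h₀ v₀ h₁ v₁ = 6 := by
  decide

lemma b2n_sub_b2n_eq_of_ice : ∀ h₀ v₀ h₁ v₁ : Bool, b2n h₀ + b2n v₀ = b2n h₁ + b2n v₁ →
    (b2n h₀ : ℤ) - b2n h₁ =
      (if vtype h₀ v₀ h₁ v₁ = 5 then 1 else 0) - (if vtype h₀ v₀ h₁ v₁ = 6 then 1 else 0) := by
  decide

lemma sum_castSucc_sub_succ {G : Type*} [AddCommGroup G] {n : ℕ} (g : Fin (n + 1) → G) :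
    ∑ i : Fin n, (g i.castSucc - g i.succ) = g 0 - g (Fin.last n) := by
  rw [sum_sub_distrib, sub_eq_sub_iff_add_eq_add, ← Fin.sum_univ_castSucc, ← Fin.sum_univ_succ]

lemma prod_weight_eq_pow_card {ι M : Type*} [Fintype ι] [CommMonoid M] (ty : ι → ℕ)
    (hty : ∀ p, ty p = 1 ∨ ty p = 2 ∨ ty p = 3 ∨ ty p = 4 ∨ ty p = 5 ∨ ty p = 6)
    (a b c : M) :
    (∏ p, if ty p = 1 ∨ ty p = 2 then a else if ty p = 3 ∨ ty p = 4 then b else c)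
      = a ^ ((univ.filter fun p => ty p = 1).card + (univ.filter fun p => ty p = 2).card)
      * b ^ ((univ.filter fun p => ty p = 3).card + (univ.filter fun p => ty p = 4).card)
      * c ^ ((univ.filter fun p => ty p = 5).card + (univ.filter fun p => ty p = 6).card) := by
  have hsplit : ∀ p, (if ty p = 1 ∨ ty p = 2 then a else if ty p = 3 ∨ ty p = 4 then b else c)
      = a ^ ((if ty p = 1 then 1 else 0) + (if ty p = 2 then 1 else 0))
        * b ^ ((if ty p = 3 then 1 else 0) + (if ty p = 4 then 1 else 0))
        * c ^ ((if ty p = 5 then 1 else 0) + (if ty p = 6 then 1 else 0)) := by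
    intro p
    rcases hty p with h | h | h | h | h | h <;> simp [h]
  simp only [hsplit, prod_mul_distrib, prod_pow_eq_pow_sum, sum_add_distrib, sum_boole,
    Nat.cast_id]

section

variable {n k : ℕ}

namespace IsStrip

variable {S : Finset (Fin n)} {τ : SConfig n k}

lemma sum_horizontal_sub (hτ : IsStrip S τ) (j : Fin k) :
    ∑ i : Fin n, ((b2n (τ.1 i.castSucc j) : ℤ) - b2n (τ.1 i.succ j)) = 1 := by
  rw [sum_castSucc_sub_succ (fun i => (b2n (τ.1 i j) : ℤ)), hτ.2.1 j, hτ.2.2.1 j]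
  rfl

lemma card_eq (hτ : IsStrip S τ) : S.card = k := by
  have hexit : ∀ i, ((b2n (τ.2 i (Fin.last k)) : ℤ) - b2n (τ.2 i 0)) = if i ∈ S then 1 else 0 := by
    intro i
    by_cases hi : i ∈ S <;> simp [b2n, hτ.2.2.2.1 i, hτ.2.2.2.2 i, hi]
  have hcolumn : ∀ i, ((b2n (τ.2 i (Fin.last k)) : ℤ) - b2n (τ.2 i 0))
      = ∑ j : Fin k, ((b2n (τ.1 i.castSucc j) : ℤ) - b2n (τ.1 i.succ j)) := by
    intro i
    rw [← neg_sub, ← sum_castSucc_sub_succ (fun y => (b2n (τ.2 i y) : ℤ)), ← sum_neg_distrib]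
    refine sum_congr rfl fun j _ => ?_
    have := hτ.1 i j
    omega
  have : (S.card : ℤ) = k := by
    calc (S.card : ℤ) = ∑ i, ((b2n (τ.2 i (Fin.last k)) : ℤ) - b2n (τ.2 i 0)) := by
          simp [hexit]
      _ = ∑ j : Fin k, ∑ i : Fin n, ((b2n (τ.1 i.castSucc j) : ℤ) - b2n (τ.1 i.succ j)) := by
          rw [sum_congr rfl fun i _ => hcolumn i, sum_comm]
      _ = k := by simp [hτ.sum_horizontal_sub]
  exact_mod_cast this

lemma card_type_five (hτ : IsStrip S τ) :
    (univ.filter fun p : Fin n × Fin k => vertexTypeS τ p.1 p.2 = 5).card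
      = (univ.filter fun p : Fin n × Fin k => vertexTypeS τ p.1 p.2 = 6).card + k := by
  have h : ∑ p : Fin n × Fin k, (((if vertexTypeS τ p.1 p.2 = 5 then 1 else 0) : ℤ)
      - (if vertexTypeS τ p.1 p.2 = 6 then 1 else 0)) = k := by
    calc _ = ∑ j : Fin k, ∑ i : Fin n, ((b2n (τ.1 i.castSucc j) : ℤ) - b2n (τ.1 i.succ j)) := by
          rw [Fintype.sum_prod_type_right]
          exact sum_congr rfl fun j _ => sum_congr rfl fun i _ =>
            (b2n_sub_b2n_eq_of_ice _ _ _ _ (hτ.1 i j)).symm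
      _ = k := by simp [hτ.sum_horizontal_sub]
  rw [sum_sub_distrib, sum_boole, sum_boole] at h
  omega

end IsStrip

lemma phA_ofReal (ph : Phase) (t γ : ℝ) : phA ph (t : ℂ) (γ : ℂ) = ((aR ph t γ : ℝ) : ℂ) := by
  cases ph <;> simp [phA, aR, ← Complex.ofReal_sub, Complex.ofReal_sinh, Complex.ofReal_sin]

lemma phB_ofReal (ph : Phase) (t γ : ℝ) : phB ph (t : ℂ) (γ : ℂ) = ((bR ph t γ : ℝ) : ℂ) := by
  cases ph <;> simp [phB, bR, ← Complex.ofReal_add, Complex.ofReal_sinh, Complex.ofReal_sin]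

lemma phC_ofReal (ph : Phase) (γ : ℝ) : phC ph (γ : ℂ) = ((cR ph γ : ℝ) : ℂ) := by
  cases ph <;> simp [phC, cR, Complex.ofReal_sinh, Complex.ofReal_sin]

section Phase

variable {ph : Phase} {t γ : ℝ}

lemma aR_pos (h : phRange ph t γ) : 0 < aR ph t γ := by
  cases ph <;> simp only [phRange, abs_lt] at h <;> simp only [aR, Real.sinh_pos_iff]
  · linarith
  · exact Real.sin_pos_of_pos_of_lt_pi (by linarith) (by linarith [Real.pi_gt_three])
  · linarith
  · linarith

lemma bR_pos (h : phRange ph t γ) : 0 < bR ph t γ := by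
  cases ph <;> simp only [phRange, abs_lt] at h <;> simp only [bR, Real.sinh_pos_iff]
  · linarith
  · exact Real.sin_pos_of_pos_of_lt_pi (by linarith) (by linarith [Real.pi_gt_three])
  · linarith
  · linarith

lemma cR_ne_zero (h : phRange ph t γ) : cR ph γ ≠ 0 := by
  cases ph <;> simp only [phRange] at h <;> simp only [cR]
  · exact Real.sinh_ne_zero.mpr (by simpa using abs_pos.mp h.1)
  · exact (Real.sin_pos_of_pos_of_lt_pi (by linarith [abs_nonneg t]) (by linarith)).ne'
  · exact (Real.sinh_pos_iff.mpr (by linarith [abs_nonneg t])).ne'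
  · linarith [abs_nonneg t]

end Phase

abbrev Strip (k : ℕ) (S : Finset (Fin n)) := {τ : SConfig n k // IsStrip S τ}

/-- Row `j` carries its path from the left boundary to column `ν j`, where it turns up. -/
def pathStrip (ν : Fin k → Fin n) : SConfig n k :=
  (fun i j => decide ((i : ℕ) ≤ ν j), fun i y => decide (∃ j : Fin k, (j : ℕ) < y ∧ ν j = i))

lemma isStrip_pathStrip {S : Finset (Fin n)} {ν : Fin k → Fin n} (hν : Function.Injective ν)
    (hS : ∀ i, i ∈ S ↔ ∃ j, ν j = i) : IsStrip S (pathStrip ν) := by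
  refine ⟨fun i j => ?_, fun j => by simp [pathStrip], fun j => by simp [pathStrip],
    fun i => by simp [pathStrip], fun i => by simp [pathStrip, hS, Fin.is_lt]⟩
  have hup : (∃ j' : Fin k, (j' : ℕ) < j + 1 ∧ ν j' = i)
      ↔ (∃ j' : Fin k, (j' : ℕ) < j ∧ ν j' = i) ∨ ν j = i := by
    constructor
    · rintro ⟨j', hj', rfl⟩
      rcases Nat.lt_succ_iff_lt_or_eq.mp hj' with h | h
      · exact Or.inl ⟨j', h, rfl⟩
      · exact Or.inr (by rw [Fin.ext h])
    · rintro (⟨j', hj', rfl⟩ | rfl)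
      · exact ⟨j', by omega, rfl⟩
      · exact ⟨j, by omega, rfl⟩
  simp only [pathStrip, b2n, Fin.val_castSucc, Fin.val_succ, hup, decide_eq_true_eq]
  by_cases hturn : ν j = i
  · have hbelow : ¬ ∃ j' : Fin k, (j' : ℕ) < j ∧ ν j' = i :=
      fun ⟨j', hj', he⟩ => (hν (he.trans hturn.symm) ▸ hj').false
    rw [if_neg hbelow, if_pos (Or.inr hturn), hturn]
    simp
  · have hne : (i : ℕ) ≠ ν j := fun h => hturn (Fin.ext h.symm)
    simp only [hturn, or_false]
    split_ifs <;> omega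

lemma nonempty_strip {S : Finset (Fin n)} (hS : S.card = k) : Nonempty (Strip k S) :=
  ⟨⟨pathStrip (S.orderEmbOfFin hS), isStrip_pathStrip (S.orderEmbOfFin hS).injective
    fun i => by rw [← Set.mem_range, range_orderEmbOfFin, mem_coe]⟩⟩

noncomputable def stripWt (ph : Phase) (ξ : Fin k → ℂ) (t γ : ℝ) (τ : SConfig n k) : ℂ :=
  ∏ p : Fin n × Fin k,
    (if vertexTypeS τ p.1 p.2 = 1 ∨ vertexTypeS τ p.1 p.2 = 2 then
        phA ph ((t : ℂ) + ξ p.2) (γ : ℂ)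
      else if vertexTypeS τ p.1 p.2 = 3 ∨ vertexTypeS τ p.1 p.2 = 4 then
        phB ph ((t : ℂ) + ξ p.2) (γ : ℂ)
      else phC ph (γ : ℂ))

lemma Fsym_eq_sum_stripWt (ph : Phase) (S : Finset (Fin n)) (ξ : Fin k → ℂ) (t γ : ℝ) :
    Fsym ph n k S ξ t γ = ∑ τ : Strip k S, stripWt ph ξ t γ τ.1 :=
  rfl

noncomputable def stripWtReal (ph : Phase) (t γ : ℝ) (τ : SConfig n k) : ℝ :=
  ∏ p : Fin n × Fin k,
    (if vertexTypeS τ p.1 p.2 = 1 ∨ vertexTypeS τ p.1 p.2 = 2 then aR ph t γ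
      else if vertexTypeS τ p.1 p.2 = 3 ∨ vertexTypeS τ p.1 p.2 = 4 then bR ph t γ
      else cR ph γ)

lemma stripWt_zero (ph : Phase) (t γ : ℝ) (τ : SConfig n k) :
    stripWt ph (fun _ => 0) t γ τ = stripWtReal ph t γ τ := by
  simp only [stripWt, stripWtReal, Complex.ofReal_prod, apply_ite (fun x : ℝ => (x : ℂ)),
    add_zero, phA_ofReal, phB_ofReal, phC_ofReal]

lemma stripWtReal_mul_pow_pos {ph : Phase} {t γ : ℝ} (h : phRange ph t γ)
    {S : Finset (Fin n)} {τ : SConfig n k} (hτ : IsStrip S τ) :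
    0 < stripWtReal ph t γ τ * cR ph γ ^ k := by
  rw [stripWtReal, prod_weight_eq_pow_card (fun p : Fin n × Fin k => vertexTypeS τ p.1 p.2)
      fun p => vtype_mem_of_ice _ _ _ _ (hτ.1 p.1 p.2), hτ.card_type_five, mul_assoc, ← pow_add,
    show ∀ m, m + k + m + k = 2 * (m + k) from fun m => by ring, pow_mul']
  exact mul_pos (mul_pos (pow_pos (aR_pos h) _) (pow_pos (bR_pos h) _))
    (sq_pos_of_ne_zero (pow_ne_zero _ (cR_ne_zero h)))

lemma Fsym_zero_ne_zero {ph : Phase} {t γ : ℝ} (h : phRange ph t γ) {S : Finset (Fin n)}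
    (hS : S.card = k) : Fsym ph n k S (fun _ => 0) t γ ≠ 0 := by
  have hpos : 0 < (∑ τ : Strip k S, stripWtReal ph t γ τ.1) * cR ph γ ^ k := by
    have := nonempty_strip hS
    rw [sum_mul]
    exact sum_pos (fun τ _ => stripWtReal_mul_pow_pos h τ.2) univ_nonempty
  rw [Fsym_eq_sum_stripWt]
  simp only [stripWt_zero, ← Complex.ofReal_sum, ne_eq, Complex.ofReal_eq_zero]
  exact left_ne_zero_of_mul hpos.ne'

lemma prod_eq_prod_castLE_mul {M : Type*} [CommMonoid M] (hkn : k ≤ n) (f : Fin n → M) :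
    ∏ j, f j = (∏ j : Fin k, f (Fin.castLE hkn j)) * ∏ j ∈ univ.filter (k ≤ ·.val), f j := by
  rw [← prod_filter_mul_prod_filter_not univ (·.val < k)]
  congr 1
  · refine (prod_nbij (Fin.castLE hkn) (by simp) (fun _ _ _ _ h => Fin.castLE_injective hkn h)
      (fun j hj => ⟨⟨j, by simpa using hj⟩, by simp, rfl⟩) fun _ _ => rfl).symm
  · simp only [not_lt]

section Glue

variable {S : Finset (Fin n)}

def lowerRows (hkn : k ≤ n) (σ : Config n) : SConfig n k :=
  (fun i j => σ.1 i (Fin.castLE hkn j), fun i y => σ.2 i (Fin.castLE (Nat.succ_le_succ hkn) y))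

def glue (τ : SConfig n k) (σ : Config n) : Config n :=
  (fun i j => if h : (j : ℕ) < k then τ.1 i ⟨j, h⟩ else σ.1 i j,
   fun i y => if h : (y : ℕ) ≤ k then τ.2 i ⟨y, Nat.lt_succ_of_le h⟩ else σ.2 i y)

lemma rowFinF_eq_iff (σ : DWBC n) (hkn : k ≤ n) :
    rowFinF σ k = S ↔ ∀ i, (σ.1.2 i ⟨k, Nat.lt_succ_of_le hkn⟩ = true ↔ i ∈ S) := by
  simp [rowFinF, dif_pos hkn, Finset.ext_iff]

lemma IsDWBC.isStrip_lowerRows {σ : Config n} (hkn : k ≤ n) (hσ : IsDWBC σ)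
    (hrow : ∀ i, (σ.2 i ⟨k, Nat.lt_succ_of_le hkn⟩ = true ↔ i ∈ S)) :
    IsStrip S (lowerRows hkn σ) :=
  ⟨fun i j => hσ.1 i (Fin.castLE hkn j), fun _ => hσ.2.1 _, fun _ => hσ.2.2.1 _,
    fun i => hσ.2.2.2.1 i, fun i => hrow i⟩

lemma glue_fst_of_le (τ : SConfig n k) (σ : Config n) (i : Fin (n + 1)) {j : Fin n}
    (hj : k ≤ (j : ℕ)) : (glue τ σ).1 i j = σ.1 i j :=
  dif_neg (not_lt.mpr hj)

lemma glue_snd_of_le {τ : SConfig n k} {σ : Config n} (hkn : k ≤ n)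
    (htop : ∀ i, τ.2 i (Fin.last k) = σ.2 i ⟨k, Nat.lt_succ_of_le hkn⟩)
    (i : Fin n) {y : Fin (n + 1)} (hy : k ≤ (y : ℕ)) : (glue τ σ).2 i y = σ.2 i y := by
  by_cases h : (y : ℕ) ≤ k
  · obtain rfl : y = ⟨k, Nat.lt_succ_of_le hkn⟩ := Fin.ext (le_antisymm h hy)
    exact (dif_pos h).trans (htop i)
  · exact dif_neg h

lemma top_eq_of_isStrip {τ : SConfig n k} {σ : Config n} (hkn : k ≤ n) (hτ : IsStrip S τ)
    (hrow : ∀ i, (σ.2 i ⟨k, Nat.lt_succ_of_le hkn⟩ = true ↔ i ∈ S)) (i : Fin n) :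
    τ.2 i (Fin.last k) = σ.2 i ⟨k, Nat.lt_succ_of_le hkn⟩ :=
  Bool.eq_iff_iff.mpr ((hτ.2.2.2.2 i).trans (hrow i).symm)

lemma vertexType_glue_of_le {τ : SConfig n k} {σ : Config n} (hkn : k ≤ n)
    (htop : ∀ i, τ.2 i (Fin.last k) = σ.2 i ⟨k, Nat.lt_succ_of_le hkn⟩)
    (i : Fin n) {j : Fin n} (hj : k ≤ (j : ℕ)) :
    vertexType (glue τ σ) i j = vertexType σ i j := by
  rw [vertexType, vertexType, glue_fst_of_le τ σ _ hj, glue_fst_of_le τ σ _ hj,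
    glue_snd_of_le hkn htop i (by simpa using hj),
    glue_snd_of_le hkn htop i (by simp [Fin.val_succ]; omega)]

lemma isDWBC_glue {τ : SConfig n k} {σ : Config n} (hkn : k ≤ n) (hσ : IsDWBC σ)
    (hτ : IsStrip S τ) (hrow : ∀ i, (σ.2 i ⟨k, Nat.lt_succ_of_le hkn⟩ = true ↔ i ∈ S)) :
    IsDWBC (glue τ σ) := by
  have htop := top_eq_of_isStrip hkn hτ hrow
  refine ⟨fun i j => ?_, fun j => ?_, fun j => ?_, fun i => ?_, fun i => ?_⟩
  · by_cases hj : (j : ℕ) < k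
    · have hice := hτ.1 i ⟨j, hj⟩
      simp only [glue, dif_pos hj, Fin.val_castSucc, Fin.val_succ, dif_pos hj.le,
        dif_pos (Nat.succ_le_of_lt hj)]
      exact hice
    · have hj' : k ≤ (j : ℕ) := not_lt.mp hj
      rw [glue_fst_of_le τ σ _ hj', glue_fst_of_le τ σ _ hj',
        glue_snd_of_le hkn htop i (by simpa using hj'),
        glue_snd_of_le hkn htop i (by simp [Fin.val_succ]; omega)]
      exact hσ.1 i j
  · by_cases hj : (j : ℕ) < k
    · exact (dif_pos hj).trans (hτ.2.1 _)
    · exact (dif_neg hj).trans (hσ.2.1 _)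
  · by_cases hj : (j : ℕ) < k
    · exact (dif_pos hj).trans (hτ.2.2.1 _)
    · exact (dif_neg hj).trans (hσ.2.2.1 _)
  · simpa [glue] using hτ.2.2.2.1 i
  · rw [glue_snd_of_le hkn htop i (by simpa using hkn)]
    exact hσ.2.2.2.2 i

lemma lowerRows_glue (hkn : k ≤ n) (τ : SConfig n k) (σ : Config n) :
    lowerRows hkn (glue τ σ) = τ :=
  Prod.ext (funext fun _ => funext fun j => dif_pos j.isLt)
    (funext fun _ => funext fun y => dif_pos (Nat.lt_succ_iff.mp y.isLt))

lemma glue_lowerRows_glue (hkn : k ≤ n) (τ : SConfig n k) (σ : Config n) :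
    glue (lowerRows hkn σ) (glue τ σ) = σ := by
  refine Prod.ext (funext fun i => funext fun j => ?_) (funext fun i => funext fun y => ?_)
  · by_cases h : (j : ℕ) < k
    · exact dif_pos h
    · exact (dif_neg h).trans (dif_neg h)
  · by_cases h : (y : ℕ) ≤ k
    · exact dif_pos h
    · exact (dif_neg h).trans (dif_neg h)

end Glue

noncomputable def shiftedWt (ph : Phase) (ξ : Fin k → ℂ) (t γ : ℝ) (σ : Config n) : ℂ :=
  ∏ p : Fin n × Fin n, vertexWt (phA ph) (phB ph) (phC ph) (fun _ => 0)
    (fun y => if h : (y : ℕ) < k then (t : ℂ) + ξ ⟨y, h⟩ else (t : ℂ)) (γ : ℂ) σ p.1 p.2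

noncomputable def upperWt (ph : Phase) (k : ℕ) (t γ : ℝ) (σ : Config n) : ℂ :=
  ∏ i : Fin n, ∏ j ∈ univ.filter (k ≤ ·.val),
    vertexWt (phA ph) (phB ph) (phC ph) (fun _ => 0) (fun _ => (t : ℂ)) (γ : ℂ) σ i j

lemma shiftedWt_eq_stripWt_mul_upperWt (ph : Phase) (hkn : k ≤ n) (ξ : Fin k → ℂ) (t γ : ℝ)
    (σ : Config n) :
    shiftedWt ph ξ t γ σ = stripWt ph ξ t γ (lowerRows hkn σ) * upperWt ph k t γ σ := by
  rw [shiftedWt, Fintype.prod_prod_type, stripWt, Fintype.prod_prod_type, upperWt,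
    ← prod_mul_distrib]
  refine prod_congr rfl fun i _ => ?_
  rw [prod_eq_prod_castLE_mul hkn]
  congr 1
  · refine prod_congr rfl fun j _ => ?_
    simp only [vertexWt, Fin.val_castLE, dif_pos j.isLt, sub_zero]
    rfl
  · refine prod_congr rfl fun j hj => ?_
    simp only [vertexWt, dif_neg (not_lt.mpr (mem_filter.mp hj).2), sub_zero]

lemma upperWt_glue (ph : Phase) (hkn : k ≤ n) (t γ : ℝ) {τ : SConfig n k} {σ : Config n}
    (htop : ∀ i, τ.2 i (Fin.last k) = σ.2 i ⟨k, Nat.lt_succ_of_le hkn⟩) :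
    upperWt ph k t γ (glue τ σ) = upperWt ph k t γ σ :=
  prod_congr rfl fun i _ => prod_congr rfl fun j hj => by
    simp only [vertexWt, vertexType_glue_of_le hkn htop i (mem_filter.mp hj).2]

abbrev DWBCWithRow (k : ℕ) (S : Finset (Fin n)) := {σ : DWBC n // rowFinF σ k = S}

def swapLower (hkn : k ≤ n) (S : Finset (Fin n)) (p : DWBCWithRow k S × Strip k S) :
    DWBCWithRow k S × Strip k S :=
  have hrow := (rowFinF_eq_iff p.1.1 hkn).mp p.1.2
  have htop := top_eq_of_isStrip hkn p.2.2 hrow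
  (⟨⟨glue p.2.1 p.1.1.1, isDWBC_glue hkn p.1.1.2 p.2.2 hrow⟩, (rowFinF_eq_iff _ hkn).mpr
      fun i => (Bool.eq_iff_iff.mp (glue_snd_of_le hkn htop i (y := ⟨k, _⟩) le_rfl)).trans
        (hrow i)⟩,
    ⟨lowerRows hkn p.1.1.1, p.1.1.2.isStrip_lowerRows hkn hrow⟩)

lemma swapLower_involutive (hkn : k ≤ n) (S : Finset (Fin n)) :
    Function.Involutive (swapLower hkn S) := fun p =>
  Prod.ext (Subtype.ext (Subtype.ext (glue_lowerRows_glue hkn p.2.1 p.1.1.1)))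
    (Subtype.ext (lowerRows_glue hkn p.2.1 p.1.1.1))

lemma sum_shiftedWt_mul_stripWt_comm (ph : Phase) (hkn : k ≤ n) (S : Finset (Fin n))
    (ξ ζ : Fin k → ℂ) (t γ : ℝ) :
    ∑ p : DWBCWithRow k S × Strip k S, shiftedWt ph ξ t γ p.1.1.1 * stripWt ph ζ t γ p.2.1
      = ∑ p : DWBCWithRow k S × Strip k S,
          shiftedWt ph ζ t γ p.1.1.1 * stripWt ph ξ t γ p.2.1 := by
  rw [← Equiv.sum_comp (swapLower_involutive hkn S).toPerm]
  refine sum_congr rfl fun p _ => ?_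
  have hrow := (rowFinF_eq_iff p.1.1 hkn).mp p.1.2
  simp only [Function.Involutive.coe_toPerm, swapLower]
  rw [shiftedWt_eq_stripWt_mul_upperWt ph hkn, lowerRows_glue,
    upperWt_glue ph hkn t γ (top_eq_of_isStrip hkn p.2.2 hrow),
    shiftedWt_eq_stripWt_mul_upperWt ph hkn ζ]
  ring

noncomputable def rowSum (ph : Phase) (S : Finset (Fin n)) (ξ : Fin k → ℂ) (t γ : ℝ) : ℂ :=
  ∑ σ : DWBC n, if rowFinF σ k = S then shiftedWt ph ξ t γ σ.1 else 0

lemma rowSum_eq_sum_subtype (ph : Phase) (S : Finset (Fin n)) (ξ : Fin k → ℂ) (t γ : ℝ) :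
    rowSum ph S ξ t γ = ∑ σ : DWBCWithRow k S, shiftedWt ph ξ t γ σ.1.1 := by
  rw [rowSum, ← sum_filter, sum_subtype]
  simp

lemma rowSum_mul_Fsym (ph : Phase) (hkn : k ≤ n) (S : Finset (Fin n)) (ξ ζ : Fin k → ℂ)
    (t γ : ℝ) :
    rowSum ph S ξ t γ * Fsym ph n k S ζ t γ = rowSum ph S ζ t γ * Fsym ph n k S ξ t γ := by
  simp only [rowSum_eq_sum_subtype, Fsym_eq_sum_stripWt, sum_mul_sum, ← Fintype.sum_prod_type']
  exact sum_shiftedWt_mul_stripWt_comm ph hkn S ξ ζ t γ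

lemma rowSum_eq_zero_of_card_ne (ph : Phase) (hkn : k ≤ n) {S : Finset (Fin n)}
    (hS : S.card ≠ k) (ξ : Fin k → ℂ) (t γ : ℝ) : rowSum ph S ξ t γ = 0 :=
  sum_eq_zero fun σ _ => if_neg fun h =>
    hS (σ.2.isStrip_lowerRows hkn ((rowFinF_eq_iff σ hkn).mp h)).card_eq

lemma sum_shiftedWt_eq_sum_rowSum (ph : Phase) (hkn : k ≤ n) (ξ : Fin k → ℂ) (t γ : ℝ) :
    ∑ σ : DWBC n, shiftedWt ph ξ t γ σ.1
      = ∑ S : Finset (Fin n), if S.card = k then rowSum ph S ξ t γ else 0 := by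
  have hsplit :
      ∑ S : Finset (Fin n), rowSum ph S ξ t γ = ∑ σ : DWBC n, shiftedWt ph ξ t γ σ.1 := by
    simp only [rowSum]
    rw [sum_comm]
    simp
  rw [← hsplit]
  refine sum_congr rfl fun S _ => ?_
  split_ifs with hS
  · rfl
  · exact rowSum_eq_zero_of_card_ne ph hkn hS ξ t γ

lemma Ztilde_eq_sum_shiftedWt_div (ph : Phase) (ξ : Fin k → ℂ) (t γ : ℝ) :
    Ztilde (phA ph) (phB ph) (phC ph) n k ξ t γ
      = (∑ σ : DWBC n, shiftedWt ph ξ t γ σ.1)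
        / Zinh n (phA ph) (phB ph) (phC ph) (fun _ => 0) (fun _ => (t : ℂ)) (γ : ℂ) :=
  rfl

lemma shiftedWt_zero (ph : Phase) (t γ : ℝ) (σ : Config n) :
    shiftedWt ph (fun _ : Fin k => 0) t γ σ
      = ∏ p : Fin n × Fin n, vertexWt (phA ph) (phB ph) (phC ph) (fun _ => 0)
          (fun _ => (t : ℂ)) (γ : ℂ) σ p.1 p.2 := by
  simp only [shiftedWt, add_zero, dite_eq_ite, ite_self]

lemma Zinh_hom_eq_sum_shiftedWt (ph : Phase) (t γ : ℝ) :
    Zinh n (phA ph) (phB ph) (phC ph) (fun _ => 0) (fun _ => (t : ℂ)) (γ : ℂ)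
      = ∑ σ : DWBC n, shiftedWt ph (fun _ : Fin k => 0) t γ σ.1 := by
  simp only [Zinh, shiftedWt_zero]

lemma shiftedWt_zero_eq_wtABC (ph : Phase) (t γ : ℝ) (σ : DWBC n) :
    shiftedWt ph (fun _ : Fin k => 0) t γ σ.1
      = ((wtABC (aR ph t γ) (bR ph t γ) (cR ph γ) σ.1 : ℝ) : ℂ) := by
  simp only [shiftedWt_zero, vertexWt, sub_zero, phA_ofReal, phB_ofReal, phC_ofReal]
  rw [prod_weight_eq_pow_card (fun p : Fin n × Fin n => vertexType σ.1 p.1 p.2)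
    fun p => vtype_mem_of_ice _ _ _ _ (σ.2.1 p.1 p.2)]
  push_cast [wtABC, Ncount]
  rfl

lemma Zinh_hom_eq_Fsym (ph : Phase) (t γ : ℝ) :
    Zinh n (phA ph) (phB ph) (phC ph) (fun _ => 0) (fun _ => (t : ℂ)) (γ : ℂ)
      = Fsym ph n n univ (fun _ => 0) t γ := by
  refine Fintype.sum_equiv (Equiv.subtypeEquivRight fun σ => ?_) _ _ fun σ => ?_
  · simp [IsDWBC, IsStrip]
  · refine prod_congr rfl fun p _ => ?_
    simp only [vertexWt, vertexType, vertexTypeS, Equiv.subtypeEquivRight, sub_zero, add_zero]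
    rfl

lemma Zinh_hom_ne_zero {ph : Phase} {t γ : ℝ} (h : phRange ph t γ) :
    Zinh n (phA ph) (phB ph) (phC ph) (fun _ => 0) (fun _ => (t : ℂ)) (γ : ℂ) ≠ 0 := by
  rw [Zinh_hom_eq_Fsym]
  exact Fsym_zero_ne_zero h (card_univ.trans (Fintype.card_fin n))

lemma rowProb_eq_rowSum_div (ph : Phase) (S : Finset (Fin n)) (t γ : ℝ) :
    ((∑ σ : DWBC n, if rowFinF σ k = S then
        gibbs n (aR ph t γ) (bR ph t γ) (cR ph γ) σ else 0 : ℝ) : ℂ)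
      = rowSum ph S (fun _ : Fin k => 0) t γ
        / Zinh n (phA ph) (phB ph) (phC ph) (fun _ => 0) (fun _ => (t : ℂ)) (γ : ℂ) := by
  simp only [rowSum, Zinh_hom_eq_sum_shiftedWt (k := k), shiftedWt_zero_eq_wtABC, gibbs, sum_div]
  push_cast
  refine sum_congr rfl fun σ _ => ?_
  split_ifs <;> simp

lemma rowProb_mul_Fsym_div {ph : Phase} {t γ : ℝ} (h : phRange ph t γ) (hkn : k ≤ n)
    {S : Finset (Fin n)} (hS : S.card = k) (ξ : Fin k → ℂ) :
    ((∑ σ : DWBC n, if rowFinF σ k = S then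
        gibbs n (aR ph t γ) (bR ph t γ) (cR ph γ) σ else 0 : ℝ) : ℂ)
        * (Fsym ph n k S ξ t γ / Fsym ph n k S (fun _ => 0) t γ)
      = rowSum ph S ξ t γ
        / Zinh n (phA ph) (phB ph) (phC ph) (fun _ => 0) (fun _ => (t : ℂ)) (γ : ℂ) := by
  rw [rowProb_eq_rowSum_div, div_mul_div_comm, ← rowSum_mul_Fsym ph hkn,
    mul_div_mul_right _ _ (Fsym_zero_ne_zero h hS)]

end

theorem normalized_partition_is_generating_function_general
    (ph : Phase) (t γ : ℝ) (hrange : phRange ph t γ)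
    (n k : ℕ) (hkn : k ≤ n) (ξ : Fin k → ℂ) :
    (∀ S : Finset (Fin n), S.card = k → Fsym ph n k S (fun _ => 0) t γ ≠ 0) ∧
    Zinh n (phA ph) (phB ph) (phC ph) (fun _ => 0) (fun _ => (t : ℂ)) (γ : ℂ) ≠ 0 ∧
    Ztilde (phA ph) (phB ph) (phC ph) n k ξ t γ =
      ∑ S : Finset (Fin n),
        (if S.card = k then
          ((∑ σ : DWBC n, if rowFinF σ k = S then
              gibbs n (aR ph t γ) (bR ph t γ) (cR ph γ) σ else 0 : ℝ) : ℂ)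
            * (Fsym ph n k S ξ t γ / Fsym ph n k S (fun _ => 0) t γ)
        else 0) := by
  refine ⟨fun S hS => Fsym_zero_ne_zero hrange hS, Zinh_hom_ne_zero hrange, ?_⟩
  rw [Ztilde_eq_sum_shiftedWt_div, sum_shiftedWt_eq_sum_rowSum ph hkn, sum_div]
  refine sum_congr rfl fun S _ => ?_
  split_ifs with hS
  · exact (rowProb_mul_Fsym_div hrange hkn hS ξ).symm
  · exact zero_div _

/-- **The normalized partition function is the generating function of the `k`-th row of
the monotone triangle:**
`Z̃_n(ξ₁,…,ξ_k; t, γ) = ∑_ν Prob((λ_1^k,…,λ_k^k) = ν) ·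
  F^{sym}_ν(ξ₁,…,ξ_k; t,γ,n)/F^{sym}_ν(0,…,0; t,γ,n)`,
the sum running over `k`-element subsets `ν` of `{1,…,n}`; moreover all the normalizing
quantities are nonzero. -/
theorem normalized_partition_is_generating_function
    (ph : Phase) (t γ : ℝ) (hrange : phRange ph t γ)
    (n k : ℕ) (hk : 1 ≤ k) (hkn : k ≤ n) (ξ : Fin k → ℂ) :
    (∀ S : Finset (Fin n), S.card = k → Fsym ph n k S (fun _ => 0) t γ ≠ 0) ∧
    Zinh n (phA ph) (phB ph) (phC ph) (fun _ => 0) (fun _ => (t : ℂ)) (γ : ℂ) ≠ 0 ∧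
    Ztilde (phA ph) (phB ph) (phC ph) n k ξ t γ =
      ∑ S : Finset (Fin n),
        (if S.card = k then
          ((∑ σ : DWBC n, if rowFinF σ k = S then
              gibbs n (aR ph t γ) (bR ph t γ) (cR ph γ) σ else 0 : ℝ) : ℂ)
            * (Fsym ph n k S ξ t γ / Fsym ph n k S (fun _ => 0) t γ)
        else 0) :=
  normalized_partition_is_generating_function_general ph t γ hrange n k hkn ξ

end SixV
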